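/- arXiv:0906.1260 — 5 statements merged into one kernel-verified Lean document; each statement's English description precedes it below -/
import Mathlib

section
/- Let [F̲,F̄] be a p-box with focal sets A_γ = [F̄⁻¹(γ), F̲⁻¹(γ)], and h : ℝ → ℝ bounded measurable. Then for every F ∈ Φ(F̲,F̄), ∫_0^1 inf_{x∈A_γ} h(x) dγ ≤ ∫_ℝ h dF ≤ ∫_0^1 sup_{x∈A_γ} h(x) dγ. Consequently E̲(h) ≥ ∫_0^1 inf_{x∈A_γ} h(x) dγ and Ē(h) ≤ ∫_0^1 sup_{x∈A_γ} h(x) dγ. -/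
/-!
Every `F` in the p-box is the law of its quantile function `F⁻¹` under Lebesgue measure on
`(0, 1)`, so `∫ h dF = ∫₀¹ h (F⁻¹ γ) dγ`. Since `F̲ ≤ F ≤ F̄`, the point `F⁻¹ γ` lies in the focal
set `A_γ`, which squeezes the integrand between `inf h(A_γ)` and `sup h(A_γ)`.

The delicate point is the measurability of `γ ↦ inf h(A_γ)`. Its sublevel sets are
`{γ | A_γ meets {h < c}}`, and an interval `[a, b]` meets a set `B` iff `a ∈ B` or
`a < sup (B ∩ (-∞, b])`; both conditions are measurable in `γ` because the endpoints of `A_γ`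
are monotone in `γ`.
-/

open Set Filter MeasureTheory Topology

lemma volume_Ioo_zero_one_inter_Iic {t : ℝ} (ht : t ≤ 1) :
    volume (Ioo 0 1 ∩ Iic t) = ENNReal.ofReal t := by
  have hae : (Ioo 0 1 ∩ Iic t : Set ℝ) =ᵐ[volume] (Ioc 0 1 ∩ Iic t : Set ℝ) :=
    Ioo_ae_eq_Ioc.inter (ae_eq_refl _)
  rw [measure_congr hae, Ioc_inter_Iic, min_eq_right ht, Real.volume_Ioc, sub_zero]

lemma abs_sInf_le_of_forall_abs_le {s : Set ℝ} {C : ℝ} (hC : 0 ≤ C) (hs : ∀ y ∈ s, |y| ≤ C) :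
    |sInf s| ≤ C := by
  rcases s.eq_empty_or_nonempty with rfl | ⟨y, hy⟩
  · simpa using hC
  have hlow : ∀ z ∈ s, -C ≤ z := fun z hz => (abs_le.1 (hs z hz)).1
  exact abs_le.2 ⟨le_csInf ⟨y, hy⟩ hlow, (csInf_le ⟨-C, hlow⟩ hy).trans (abs_le.1 (hs y hy)).2⟩

lemma sInf_image_neg (h : ℝ → ℝ) (s : Set ℝ) : sInf ((fun x => -h x) '' s) = -sSup (h '' s) := by
  rw [← Real.sInf_neg, ← image_neg_eq_neg, image_image]

lemma exists_mem_Icc_iff_lt_sSup {B : Set ℝ} {a b : ℝ} (hab : a ≤ b) :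
    (∃ x ∈ Icc a b, x ∈ B) ↔
      (a : EReal) < sSup (((↑) : ℝ → EReal) '' (B ∩ Iic b)) ∨ a ∈ B := by
  constructor
  · rintro ⟨x, ⟨hax, hxb⟩, hxB⟩
    rcases hax.eq_or_lt with rfl | hax
    · exact .inr hxB
    · exact .inl ((EReal.coe_lt_coe_iff.2 hax).trans_le (le_sSup ⟨x, ⟨hxB, hxb⟩, rfl⟩))
  · rintro (hlt | haB)
    · obtain ⟨_, ⟨x, ⟨hxB, hxb⟩, rfl⟩, hax⟩ := lt_sSup_iff.1 hlt
      exact ⟨x, ⟨(EReal.coe_lt_coe_iff.1 hax).le, hxb⟩, hxB⟩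
    · exact ⟨a, ⟨le_rfl, hab⟩, haB⟩

section Measurability

variable {α : Type*} [MeasurableSpace α] {μ : Measure α}

lemma nullMeasurableSet_exists_mem_Icc {a b : α → ℝ} (ha : AEMeasurable a μ)
    (hb : AEMeasurable b μ) (hab : ∀ᵐ γ ∂μ, a γ ≤ b γ) {B : Set ℝ} (hB : MeasurableSet B) :
    NullMeasurableSet {γ | ∃ x ∈ Icc (a γ) (b γ), x ∈ B} μ := by
  have hmono : Monotone fun t : ℝ => sSup (((↑) : ℝ → EReal) '' (B ∩ Iic t)) :=
    fun _ _ hst => sSup_le_sSup (image_mono (inter_subset_inter_right _ (Iic_subset_Iic.2 hst)))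
  have hsup : AEMeasurable (fun γ => sSup (((↑) : ℝ → EReal) '' (B ∩ Iic (b γ)))) μ :=
    hmono.measurable.comp_aemeasurable hb
  refine ((nullMeasurableSet_lt (measurable_coe_real_ereal.comp_aemeasurable ha) hsup).union
    (ha.nullMeasurable hB)).congr (eventuallyEq_set.2 ?_)
  filter_upwards [hab] with γ hγ
  exact (exists_mem_Icc_iff_lt_sSup hγ).symm

lemma aemeasurable_sInf_image_Icc {a b : α → ℝ} (ha : AEMeasurable a μ)
    (hb : AEMeasurable b μ) (hab : ∀ᵐ γ ∂μ, a γ ≤ b γ) {h : ℝ → ℝ} (hh : Measurable h)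
    (hbdd : BddBelow (range h)) :
    AEMeasurable (fun γ => sInf (h '' Icc (a γ) (b γ))) μ := by
  refine NullMeasurable.aemeasurable (measurable_of_Iio (δ := NullMeasurableSpace α μ) fun c =>
    show NullMeasurableSet _ μ from ?_)
  refine (nullMeasurableSet_exists_mem_Icc ha hb hab (hh (measurableSet_Iio (a := c)))).congr
    (eventuallyEq_set.2 ?_)
  filter_upwards [hab] with γ hγ
  exact (exists_mem_image (f := h) (p := (· < c))).symm.trans
    (csInf_lt_iff (hbdd.mono (image_subset_range _ _)) ((nonempty_Icc.2 hγ).image h)).symm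

end Measurability

namespace StieltjesFunction

variable (F : StieltjesFunction ℝ)

noncomputable def quantile (γ : ℝ) : ℝ := sInf {x | γ ≤ F x}

variable {F} {γ : ℝ}

lemma bddBelow_setOf_le (hbot : Tendsto F atBot (𝓝 0)) (hγ : 0 < γ) :
    BddBelow {x | γ ≤ F x} := by
  obtain ⟨x₀, hx₀⟩ := (hbot.eventually (eventually_lt_nhds hγ)).exists
  exact ⟨x₀, fun x hx => (F.mono.reflect_lt (hx₀.trans_le hx)).le⟩

lemma nonempty_setOf_le (htop : Tendsto F atTop (𝓝 1)) (hγ : γ < 1) :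
    {x | γ ≤ F x}.Nonempty :=
  (htop.eventually (eventually_gt_nhds hγ)).exists.imp fun _ => le_of_lt

/-- The direction `quantile ≤ x → γ ≤ F x` is where right-continuity enters. -/
lemma quantile_le_iff (hbot : Tendsto F atBot (𝓝 0)) (htop : Tendsto F atTop (𝓝 1))
    (h0 : 0 < γ) (h1 : γ < 1) {x : ℝ} : F.quantile γ ≤ x ↔ γ ≤ F x := by
  refine ⟨fun hq => ?_, fun hx => csInf_le (bddBelow_setOf_le hbot h0) hx⟩
  refine ge_of_tendsto ((F.right_continuous x).mono Ioi_subset_Ici_self) ?_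
  filter_upwards [self_mem_nhdsWithin] with y (hy : x < y)
  obtain ⟨s, hs, hsy⟩ := exists_lt_of_csInf_lt (nonempty_setOf_le htop h1) (hq.trans_lt hy)
  exact hs.trans (F.mono hsy.le)

lemma monotoneOn_quantile (hbot : Tendsto F atBot (𝓝 0)) (htop : Tendsto F atTop (𝓝 1)) :
    MonotoneOn F.quantile (Ioo 0 1) := fun _ h₁ _ h₂ h12 =>
  (quantile_le_iff hbot htop h₁.1 h₁.2).2 <|
    h12.trans ((quantile_le_iff hbot htop h₂.1 h₂.2).1 le_rfl)

lemma aemeasurable_quantile (hbot : Tendsto F atBot (𝓝 0)) (htop : Tendsto F atTop (𝓝 1)) :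
    AEMeasurable F.quantile (volume.restrict (Ioo 0 1)) :=
  aemeasurable_restrict_of_monotoneOn measurableSet_Ioo (monotoneOn_quantile hbot htop)

/-- Inverse transform sampling. -/
theorem map_quantile_volume (hbot : Tendsto F atBot (𝓝 0)) (htop : Tendsto F atTop (𝓝 1)) :
    (volume.restrict (Ioo 0 1)).map F.quantile = F.measure := by
  have := F.isProbabilityMeasure hbot htop
  refine Measure.ext_of_Iic _ _ fun x => ?_
  have hpre : F.quantile ⁻¹' Iic x ∩ Ioo 0 1 = Ioo 0 1 ∩ Iic (F x) := by
    ext γ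
    simp only [mem_inter_iff, mem_preimage, mem_Iic]
    exact ⟨fun ⟨hq, hγ⟩ => ⟨hγ, (quantile_le_iff hbot htop hγ.1 hγ.2).1 hq⟩,
      fun ⟨hγ, hx⟩ => ⟨(quantile_le_iff hbot htop hγ.1 hγ.2).2 hx, hγ⟩⟩
  have hF1 : F x ≤ 1 := ge_of_tendsto htop (eventually_atTop.2 ⟨x, fun y hy => F.mono hy⟩)
  rw [Measure.map_apply_of_aemeasurable (aemeasurable_quantile hbot htop) measurableSet_Iic,
    Measure.restrict_apply' measurableSet_Ioo, hpre, volume_Ioo_zero_one_inter_Iic hF1,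
    F.measure_Iic hbot, sub_zero]

theorem integral_eq_integral_quantile (hbot : Tendsto F atBot (𝓝 0))
    (htop : Tendsto F atTop (𝓝 1)) {E : Type*} [NormedAddCommGroup E] [NormedSpace ℝ E]
    {h : ℝ → E} (hh : AEStronglyMeasurable h F.measure) :
    ∫ x, h x ∂F.measure = ∫ γ in Ioo 0 1, h (F.quantile γ) := by
  rw [← map_quantile_volume hbot htop] at hh ⊢
  exact integral_map (aemeasurable_quantile hbot htop) hh

end StieltjesFunction

open StieltjesFunction

section PBox

variable {F Fl Fu : StieltjesFunction ℝ} {γ : ℝ}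

/-- The distributions `Φ(F̲, F̄)` of the p-box `[F̲, F̄]`. -/
def pbox (Fl Fu : StieltjesFunction ℝ) : Set (StieltjesFunction ℝ) :=
  {F | (Tendsto F atBot (𝓝 0) ∧ Tendsto F atTop (𝓝 1)) ∧ ∀ x, Fl x ≤ F x ∧ F x ≤ Fu x}

/-- The focal set `A_γ = [F̄⁻¹(γ), F̲⁻¹(γ)]` of the p-box `[F̲, F̄]`. -/
def focalSet (Fl Fu : StieltjesFunction ℝ) (γ : ℝ) : Set ℝ :=
  Icc (sSup {x | Fu x < γ}) (sInf {x | Fl x > γ})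

lemma quantile_mem_focalSet (hbot : Tendsto F atBot (𝓝 0)) (htop : Tendsto F atTop (𝓝 1))
    (hFu : Tendsto Fu atBot (𝓝 0)) (hFl : Tendsto Fl atTop (𝓝 1))
    (hbox : ∀ x, Fl x ≤ F x ∧ F x ≤ Fu x) (h0 : 0 < γ) (h1 : γ < 1) :
    F.quantile γ ∈ focalSet Fl Fu γ := by
  have hiff {x : ℝ} := quantile_le_iff hbot htop h0 h1 (x := x)
  constructor
  · refine csSup_le (hFu.eventually (eventually_lt_nhds h0)).exists fun t ht => ?_
    exact (not_le.1 fun hq => (hiff.1 hq).not_gt (((hbox t).2).trans_lt ht)).le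
  · exact le_csInf (hFl.eventually (eventually_gt_nhds h1)).exists
      fun s hs => hiff.2 (hs.le.trans (hbox s).1)

lemma monotoneOn_sSup_setOf_lt (hbot : Tendsto F atBot (𝓝 0)) (htop : Tendsto F atTop (𝓝 1)) :
    MonotoneOn (fun γ => sSup {x | F x < γ}) (Ioo 0 1) := by
  intro γ₁ h₁ γ₂ h₂ h12
  obtain ⟨s, hs⟩ := (htop.eventually (eventually_gt_nhds h₂.2)).exists
  exact csSup_le_csSup ⟨s, fun x hx => (F.mono.reflect_lt (hx.trans hs)).le⟩
    (hbot.eventually (eventually_lt_nhds h₁.1)).exists fun x hx => hx.trans_le h12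

lemma monotoneOn_sInf_setOf_gt (hbot : Tendsto F atBot (𝓝 0)) (htop : Tendsto F atTop (𝓝 1)) :
    MonotoneOn (fun γ => sInf {x | F x > γ}) (Ioo 0 1) := by
  intro γ₁ h₁ γ₂ h₂ h12
  obtain ⟨s, hs⟩ := (hbot.eventually (eventually_lt_nhds h₁.1)).exists
  exact csInf_le_csInf ⟨s, fun x hx => (F.mono.reflect_lt (hs.trans hx)).le⟩
    (htop.eventually (eventually_gt_nhds h₂.2)).exists fun x hx => h12.trans_lt hx

lemma aemeasurable_sInf_image_focalSet
    (hFl : Tendsto Fl atBot (𝓝 0) ∧ Tendsto Fl atTop (𝓝 1))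
    (hFu : Tendsto Fu atBot (𝓝 0) ∧ Tendsto Fu atTop (𝓝 1))
    (hne : ∀ γ ∈ Ioo (0 : ℝ) 1, (focalSet Fl Fu γ).Nonempty) {h : ℝ → ℝ} (hh : Measurable h)
    (hbdd : BddBelow (range h)) :
    AEMeasurable (fun γ => sInf (h '' focalSet Fl Fu γ)) (volume.restrict (Ioo 0 1)) :=
  aemeasurable_sInf_image_Icc
    (aemeasurable_restrict_of_monotoneOn measurableSet_Ioo (monotoneOn_sSup_setOf_lt hFu.1 hFu.2))
    (aemeasurable_restrict_of_monotoneOn measurableSet_Ioo (monotoneOn_sInf_setOf_gt hFl.1 hFl.2))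
    ((ae_restrict_mem measurableSet_Ioo).mono fun γ hγ => nonempty_Icc.1 (hne γ hγ)) hh hbdd

theorem integral_sInf_image_focalSet_le
    (hFl : Tendsto Fl atBot (𝓝 0) ∧ Tendsto Fl atTop (𝓝 1))
    (hFu : Tendsto Fu atBot (𝓝 0) ∧ Tendsto Fu atTop (𝓝 1)) (hF : F ∈ pbox Fl Fu)
    {h : ℝ → ℝ} {C : ℝ} (hh : Measurable h) (hbd : ∀ x, |h x| ≤ C) :
    ∫ γ in (0 : ℝ)..1, sInf (h '' focalSet Fl Fu γ) ≤ ∫ x, h x ∂F.measure := by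
  obtain ⟨⟨hbot, htop⟩, hbox⟩ := hF
  have hmem : ∀ γ ∈ Ioo (0 : ℝ) 1, F.quantile γ ∈ focalSet Fl Fu γ := fun γ hγ =>
    quantile_mem_focalSet hbot htop hFu.1 hFl.2 hbox hγ.1 hγ.2
  have hbdd : BddBelow (range h) := ⟨-C, forall_mem_range.2 fun x => (abs_le.1 (hbd x)).1⟩
  have hC : 0 ≤ C := (abs_nonneg _).trans (hbd 0)
  have hinf_int : Integrable (fun γ => sInf (h '' focalSet Fl Fu γ))
      (volume.restrict (Ioo 0 1)) :=
    .of_bound (aemeasurable_sInf_image_focalSet hFl hFu (fun γ hγ => ⟨_, hmem γ hγ⟩) hh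
      hbdd).aestronglyMeasurable C
      (ae_of_all _ fun γ => abs_sInf_le_of_forall_abs_le hC (forall_mem_image.2 fun x _ => hbd x))
  have hquantile_int : Integrable (fun γ => h (F.quantile γ)) (volume.restrict (Ioo 0 1)) :=
    .of_bound (hh.comp_aemeasurable (aemeasurable_quantile hbot htop)).aestronglyMeasurable C
      (ae_of_all _ fun γ => hbd _)
  rw [intervalIntegral.integral_of_le zero_le_one, integral_Ioc_eq_integral_Ioo,
    F.integral_eq_integral_quantile hbot htop hh.aestronglyMeasurable]
  refine integral_mono_ae hinf_int hquantile_int ?_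
  filter_upwards [ae_restrict_mem measurableSet_Ioo] with γ hγ
  exact csInf_le (hbdd.mono (image_subset_range _ _)) (mem_image_of_mem h (hmem γ hγ))

theorem integral_le_integral_sSup_image_focalSet
    (hFl : Tendsto Fl atBot (𝓝 0) ∧ Tendsto Fl atTop (𝓝 1))
    (hFu : Tendsto Fu atBot (𝓝 0) ∧ Tendsto Fu atTop (𝓝 1)) (hF : F ∈ pbox Fl Fu)
    {h : ℝ → ℝ} {C : ℝ} (hh : Measurable h) (hbd : ∀ x, |h x| ≤ C) :
    ∫ x, h x ∂F.measure ≤ ∫ γ in (0 : ℝ)..1, sSup (h '' focalSet Fl Fu γ) := by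
  have := integral_sInf_image_focalSet_le hFl hFu hF hh.neg (C := C) fun x => by
    simpa using hbd x
  simpa only [sInf_image_neg, Pi.neg_apply, integral_neg, intervalIntegral.integral_neg,
    neg_le_neg_iff] using this

end PBox

theorem random_set_expectation_bounds_general
    (Fl Fu : StieltjesFunction ℝ)
    (hFl : Tendsto Fl atBot (nhds 0) ∧ Tendsto Fl atTop (nhds 1))
    (hFu : Tendsto Fu atBot (nhds 0) ∧ Tendsto Fu atTop (nhds 1))
    (h : ℝ → ℝ) (C : ℝ) (hbd : ∀ x, |h x| ≤ C) (hmeas : Measurable h)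
    (Φ : Set (StieltjesFunction ℝ))
    (hΦ : Φ = {F : StieltjesFunction ℝ | (Tendsto F atBot (nhds 0) ∧ Tendsto F atTop (nhds 1)) ∧
          ∀ x, Fl x ≤ F x ∧ F x ≤ Fu x})
    (hne : Φ.Nonempty) :
    (∀ F ∈ Φ,
      (∫ γ in (0:ℝ)..1,
          sInf (h '' Icc (sSup {x : ℝ | Fu x < γ}) (sInf {x : ℝ | Fl x > γ})))
        ≤ ∫ x, h x ∂F.measure ∧
      ∫ x, h x ∂F.measure ≤
        ∫ γ in (0:ℝ)..1,
          sSup (h '' Icc (sSup {x : ℝ | Fu x < γ}) (sInf {x : ℝ | Fl x > γ}))) ∧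
    (∫ γ in (0:ℝ)..1,
        sInf (h '' Icc (sSup {x : ℝ | Fu x < γ}) (sInf {x : ℝ | Fl x > γ})))
      ≤ sInf ((fun F : StieltjesFunction ℝ => ∫ x, h x ∂F.measure) '' Φ) ∧
    sSup ((fun F : StieltjesFunction ℝ => ∫ x, h x ∂F.measure) '' Φ) ≤
      ∫ γ in (0:ℝ)..1,
        sSup (h '' Icc (sSup {x : ℝ | Fu x < γ}) (sInf {x : ℝ | Fl x > γ})) := by
  subst hΦ
  have hsandwich := fun F (hF : F ∈ pbox Fl Fu) =>
    And.intro (integral_sInf_image_focalSet_le hFl hFu hF hmeas hbd)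
      (integral_le_integral_sSup_image_focalSet hFl hFu hF hmeas hbd)
  exact ⟨hsandwich, le_csInf (hne.image _) (forall_mem_image.2 fun F hF => (hsandwich F hF).1),
    csSup_le (hne.image _) (forall_mem_image.2 fun F hF => (hsandwich F hF).2)⟩

/-- The random-set (Choquet) bounds sandwich every expectation over
the p-box, hence bound the lower and upper expectations. -/
theorem random_set_expectation_bounds
    (Fl Fu : StieltjesFunction ℝ)
    (hFl : Tendsto Fl atBot (nhds 0) ∧ Tendsto Fl atTop (nhds 1))
    (hFu : Tendsto Fu atBot (nhds 0) ∧ Tendsto Fu atTop (nhds 1))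
    (hle : ∀ x, Fl x ≤ Fu x)
    (h : ℝ → ℝ) (C : ℝ) (hbd : ∀ x, |h x| ≤ C) (hmeas : Measurable h)
    (Φ : Set (StieltjesFunction ℝ))
    (hΦ : Φ = {F : StieltjesFunction ℝ | (Tendsto F atBot (nhds 0) ∧ Tendsto F atTop (nhds 1)) ∧
          ∀ x, Fl x ≤ F x ∧ F x ≤ Fu x})
    (hne : Φ.Nonempty) :
    (∀ F ∈ Φ,
      (∫ γ in (0:ℝ)..1,
          sInf (h '' Icc (sSup {x : ℝ | Fu x < γ}) (sInf {x : ℝ | Fl x > γ})))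
        ≤ ∫ x, h x ∂F.measure ∧
      ∫ x, h x ∂F.measure ≤
        ∫ γ in (0:ℝ)..1,
          sSup (h '' Icc (sSup {x : ℝ | Fu x < γ}) (sInf {x : ℝ | Fl x > γ}))) ∧
    (∫ γ in (0:ℝ)..1,
        sInf (h '' Icc (sSup {x : ℝ | Fu x < γ}) (sInf {x : ℝ | Fl x > γ})))
      ≤ sInf ((fun F : StieltjesFunction ℝ => ∫ x, h x ∂F.measure) '' Φ) ∧
    sSup ((fun F : StieltjesFunction ℝ => ∫ x, h x ∂F.measure) '' Φ) ≤
      ∫ γ in (0:ℝ)..1,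
        sSup (h '' Icc (sSup {x : ℝ | Fu x < γ}) (sInf {x : ℝ | Fl x > γ})) :=
  random_set_expectation_bounds_general Fl Fu hFl hFu h C hbd hmeas Φ hΦ hne
end

section
/- Let [F̲,F̄] be a p-box with F̲, F̄ continuous and strictly increasing on their supports, and let h : ℝ → ℝ be continuous, increasing on (-∞,a] and decreasing on [a,∞). Then the upper expectation of h over Φ(F̲,F̄) equals ∫_{-∞}^a h dF̲ + h(a)·(F̄(a) − F̲(a)) + ∫_a^∞ h dF̄, and this value is attained by the distribution F* defined by F*(x) = F̲(x) for x < a, F*(x) = F̄(x) for x ≥ a. -/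
open Set Filter MeasureTheory
open scoped Topology

/-!
Let `ν` be the Stieltjes measure of `x ↦ h (min x a) - h (max x a)`, so that `h a - h x` is the
`ν`-mass of `[min x a, max x a)`. By Tonelli, for a distribution function `F` the expected shortfall
`∫ (h a - h) dF` equals `∫ ν(dt)` of `F t` for `t < a` and of `1 - F t` for `t ≥ a`. On the p-box
this integrand is minimised pointwise by following `F̲` left of `a` and `F̄` from `a` on; the same
identity, applied to `F̲` restricted to `(-∞, a)` plus `F̄` restricted to `(a, ∞)`, evaluates the
optimum, the remaining mass `F̄ a - F̲ a` sitting at `a`.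
-/

/-- The points `x` with `t ∈ [min x a, max x a)`, i.e. those separated from `a` by `t`. -/
def beyond (a t : ℝ) : Set ℝ := if t < a then Iic t else Ioi t

theorem lintegral_measure_prodMk_comm {α β : Type*} [MeasurableSpace α] [MeasurableSpace β]
    (μ : Measure α) (ν : Measure β) [SFinite μ] [SFinite ν] {s : Set (α × β)}
    (hs : MeasurableSet s) :
    ∫⁻ x, ν (Prod.mk x ⁻¹' s) ∂μ = ∫⁻ y, μ ((·, y) ⁻¹' s) ∂ν :=
  (Measure.prod_apply hs).symm.trans (Measure.prod_apply_symm hs)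

theorem preimage_setOf_mem_Ico_min_max (a t : ℝ) :
    (·, t) ⁻¹' {p : ℝ × ℝ | p.2 ∈ Ico (min p.1 a) (max p.1 a)} = beyond a t := by
  ext x
  unfold beyond
  split_ifs <;> grind

theorem lintegral_measure_Ico_min_max (μ ν : Measure ℝ) [SFinite μ] [SFinite ν] (a : ℝ) :
    ∫⁻ x, ν (Ico (min x a) (max x a)) ∂μ = ∫⁻ t, μ (beyond a t) ∂ν := by
  have hs : MeasurableSet {p : ℝ × ℝ | p.2 ∈ Ico (min p.1 a) (max p.1 a)} :=
    (measurableSet_le (by fun_prop) measurable_snd).inter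
      (measurableSet_lt measurable_snd (by fun_prop))
  exact (lintegral_measure_prodMk_comm μ ν hs).trans
    (by simp only [preimage_setOf_mem_Ico_min_max])

namespace StieltjesFunction

noncomputable def piecewise (f g : StieltjesFunction ℝ) (a : ℝ) (hfg : f a ≤ g a) :
    StieltjesFunction ℝ where
  toFun x := if x < a then f x else g x
  mono' x y hxy := by
    dsimp only
    split_ifs with hx hy hy
    · exact f.mono hxy
    · exact (f.mono hx.le).trans (hfg.trans (g.mono (not_lt.1 hy)))
    · exact absurd (hxy.trans_lt hy) hx
    · exact g.mono hxy
  right_continuous' x := by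
    by_cases hx : x < a
    · refine (f.right_continuous x).congr_of_eventuallyEq ?_ (if_pos hx)
      filter_upwards [(eventually_lt_nhds hx).filter_mono nhdsWithin_le_nhds] with y hy
      exact if_pos hy
    · exact (g.right_continuous x).congr (fun y hy => if_neg fun hya => hx (hy.trans_lt hya))
        (if_neg hx)

theorem piecewise_apply (f g : StieltjesFunction ℝ) (a : ℝ) (hfg : f a ≤ g a) (x : ℝ) :
    f.piecewise g a hfg x = if x < a then f x else g x := rfl

theorem tendsto_piecewise_atBot (f g : StieltjesFunction ℝ) (a : ℝ)
    (hfg : f a ≤ g a) {l : ℝ} (hf : Tendsto f atBot (𝓝 l)) :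
    Tendsto (f.piecewise g a hfg) atBot (𝓝 l) :=
  hf.congr' <| (eventually_lt_atBot a).mono fun _ hx => (if_pos hx).symm

theorem tendsto_piecewise_atTop (f g : StieltjesFunction ℝ) (a : ℝ)
    (hfg : f a ≤ g a) {l : ℝ} (hg : Tendsto g atTop (𝓝 l)) :
    Tendsto (f.piecewise g a hfg) atTop (𝓝 l) :=
  hg.congr' <| (eventually_ge_atTop a).mono fun _ hx => (if_neg (not_lt.2 hx)).symm

theorem measure_beyond (f : StieltjesFunction ℝ) (hbot : Tendsto f atBot (𝓝 0))
    (htop : Tendsto f atTop (𝓝 1)) (a t : ℝ) :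
    f.measure (beyond a t) = ENNReal.ofReal (if t < a then f t else 1 - f t) := by
  unfold beyond
  split_ifs
  · rw [f.measure_Iic hbot, sub_zero]
  · exact f.measure_Ioi htop t

noncomputable def ofUnimodal (h : ℝ → ℝ) (a : ℝ) (hcont : Continuous h)
    (hmono : MonotoneOn h (Iic a)) (hanti : AntitoneOn h (Ici a)) : StieltjesFunction ℝ where
  toFun x := h (min x a) - h (max x a)
  mono' x y hxy := sub_le_sub
    (hmono (min_le_right x a) (min_le_right y a) (min_le_min_right a hxy))
    (hanti (le_max_right x a) (le_max_right y a) (max_le_max_right a hxy))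
  right_continuous' x := by fun_prop

theorem ofUnimodal_apply (h : ℝ → ℝ) (a : ℝ) (hcont : Continuous h)
    (hmono : MonotoneOn h (Iic a)) (hanti : AntitoneOn h (Ici a)) (x : ℝ) :
    ofUnimodal h a hcont hmono hanti x = h (min x a) - h (max x a) := rfl

theorem ofUnimodal_measure_Ico (h : ℝ → ℝ) (a : ℝ) (hcont : Continuous h)
    (hmono : MonotoneOn h (Iic a)) (hanti : AntitoneOn h (Ici a)) (x : ℝ) :
    (ofUnimodal h a hcont hmono hanti).measure (Ico (min x a) (max x a)) =
      ENNReal.ofReal (h a - h x) := by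
  have hc : Continuous (ofUnimodal h a hcont hmono hanti) :=
    (by fun_prop : Continuous fun x => h (min x a) - h (max x a))
  rw [measure_Ico, hc.continuousWithinAt.leftLim_eq, hc.continuousWithinAt.leftLim_eq,
    ofUnimodal_apply, ofUnimodal_apply]
  congr 1
  rcases le_total x a with hxa | hax
  · simp [hxa]
  · simp [hax]

end StieltjesFunction

theorem integral_const_sub {α : Type*} [MeasurableSpace α] {μ : Measure α} [IsFiniteMeasure μ]
    {f : α → ℝ} (hf : Integrable f μ) (c : ℝ) :
    ∫ x, (c - f x) ∂μ = μ.real univ * c - ∫ x, f x ∂μ := by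
  rw [integral_sub (integrable_const c) hf, integral_const, smul_eq_mul]

theorem Continuous.integrable_of_abs_le {h : ℝ → ℝ} (hcont : Continuous h) {C : ℝ}
    (hbd : ∀ x, |h x| ≤ C) (μ : Measure ℝ) [IsFiniteMeasure μ] : Integrable h μ :=
  .of_bound hcont.aestronglyMeasurable C (ae_of_all _ hbd)

theorem apply_le_of_monotoneOn_Iic_of_antitoneOn_Ici {h : ℝ → ℝ} {a : ℝ}
    (hmono : MonotoneOn h (Iic a)) (hanti : AntitoneOn h (Ici a)) (x : ℝ) : h x ≤ h a := by
  rcases le_total x a with hxa | hax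
  · exact hmono hxa (le_refl a) hxa
  · exact hanti (le_refl a) hax hax

theorem ofReal_integral_sub_eq_lintegral_measure_beyond {h : ℝ → ℝ} {a : ℝ} (hcont : Continuous h)
    (hmono : MonotoneOn h (Iic a)) (hanti : AntitoneOn h (Ici a)) (μ : Measure ℝ)
    [IsFiniteMeasure μ] (hint : Integrable h μ) :
    ENNReal.ofReal (∫ x, (h a - h x) ∂μ) = ∫⁻ t, μ (beyond a t)
      ∂(StieltjesFunction.ofUnimodal h a hcont hmono hanti).measure := by
  have hint' : Integrable (fun x => h a - h x) μ := (integrable_const _).sub hint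
  rw [ofReal_integral_eq_lintegral_ofReal hint' (ae_of_all _ fun x =>
    sub_nonneg.2 (apply_le_of_monotoneOn_Iic_of_antitoneOn_Ici hmono hanti x)),
    ← lintegral_measure_Ico_min_max]
  simp_rw [StieltjesFunction.ofUnimodal_measure_Ico]

theorem integral_sub_le_of_measure_beyond_le {h : ℝ → ℝ} {a : ℝ} (hcont : Continuous h)
    (hmono : MonotoneOn h (Iic a)) (hanti : AntitoneOn h (Ici a)) (μ μ' : Measure ℝ)
    [IsFiniteMeasure μ] [IsFiniteMeasure μ'] (hμ : Integrable h μ) (hμ' : Integrable h μ')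
    (hle : ∀ t, μ (beyond a t) ≤ μ' (beyond a t)) :
    ∫ x, (h a - h x) ∂μ ≤ ∫ x, (h a - h x) ∂μ' := by
  rw [← ENNReal.ofReal_le_ofReal_iff (integral_nonneg fun x =>
      sub_nonneg.2 (apply_le_of_monotoneOn_Iic_of_antitoneOn_Ici hmono hanti x)),
    ofReal_integral_sub_eq_lintegral_measure_beyond hcont hmono hanti μ hμ,
    ofReal_integral_sub_eq_lintegral_measure_beyond hcont hmono hanti μ' hμ']
  exact lintegral_mono hle

theorem integral_le_integral_piecewise {h : ℝ → ℝ} {a : ℝ} (hcont : Continuous h)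
    (hmono : MonotoneOn h (Iic a)) (hanti : AntitoneOn h (Ici a)) {C : ℝ} (hbd : ∀ x, |h x| ≤ C)
    {Fl Fu F : StieltjesFunction ℝ} (hFl : Tendsto Fl atBot (𝓝 0)) (hFu : Tendsto Fu atTop (𝓝 1))
    (hFbot : Tendsto F atBot (𝓝 0)) (hFtop : Tendsto F atTop (𝓝 1)) (hFlF : ∀ x, Fl x ≤ F x)
    (hFFu : ∀ x, F x ≤ Fu x) (hle : Fl a ≤ Fu a) :
    ∫ x, h x ∂F.measure ≤ ∫ x, h x ∂(Fl.piecewise Fu a hle).measure := by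
  set Fs := Fl.piecewise Fu a hle
  have hint (μ : Measure ℝ) [IsFiniteMeasure μ] : Integrable h μ :=
    hcont.integrable_of_abs_le hbd μ
  have hFs_bot := Fl.tendsto_piecewise_atBot Fu a hle hFl
  have hFs_top := Fl.tendsto_piecewise_atTop Fu a hle hFu
  have := Fs.isProbabilityMeasure hFs_bot hFs_top
  have := F.isProbabilityMeasure hFbot hFtop
  have hD := integral_sub_le_of_measure_beyond_le hcont hmono hanti Fs.measure F.measure
    (hint _) (hint _) fun t => by
      rw [Fs.measure_beyond hFs_bot hFs_top, F.measure_beyond hFbot hFtop,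
        StieltjesFunction.piecewise_apply]
      split_ifs <;> exact ENNReal.ofReal_le_ofReal (by linarith [hFlF t, hFFu t])
  rw [integral_const_sub (hint _),
    integral_const_sub (hint _), probReal_univ, probReal_univ] at hD
  linarith

theorem integral_piecewise {h : ℝ → ℝ} {a : ℝ} (hcont : Continuous h)
    (hmono : MonotoneOn h (Iic a)) (hanti : AntitoneOn h (Ici a)) {C : ℝ} (hbd : ∀ x, |h x| ≤ C)
    {Fl Fu : StieltjesFunction ℝ} (hFl_bot : Tendsto Fl atBot (𝓝 0))
    (hFl_top : Tendsto Fl atTop (𝓝 1)) (hFu_bot : Tendsto Fu atBot (𝓝 0))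
    (hFu_top : Tendsto Fu atTop (𝓝 1)) (hFla : ContinuousAt Fl a) (hle : Fl a ≤ Fu a) :
    ∫ x, h x ∂(Fl.piecewise Fu a hle).measure =
      (∫ x in Iio a, h x ∂Fl.measure) + h a * (Fu a - Fl a) + ∫ x in Ioi a, h x ∂Fu.measure := by
  set Fs := Fl.piecewise Fu a hle
  have hint (μ : Measure ℝ) [IsFiniteMeasure μ] : Integrable h μ :=
    hcont.integrable_of_abs_le hbd μ
  have hFs_bot := Fl.tendsto_piecewise_atBot Fu a hle hFl_bot
  have hFs_top := Fl.tendsto_piecewise_atTop Fu a hle hFu_top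
  have := Fs.isProbabilityMeasure hFs_bot hFs_top
  have := Fl.isProbabilityMeasure hFl_bot hFl_top
  have := Fu.isProbabilityMeasure hFu_bot hFu_top
  set μ := Fl.measure.restrict (Iio a) + Fu.measure.restrict (Ioi a)
  have hlayer (t : ℝ) : Fs.measure (beyond a t) =
      μ (beyond a t) := by
    rw [Measure.add_apply, Measure.restrict_apply' measurableSet_Iio,
      Measure.restrict_apply' measurableSet_Ioi]
    unfold beyond
    split_ifs with ht
    · rw [inter_eq_left.2 (Iic_subset_Iio.2 ht), Iic_inter_Ioi, Ioc_eq_empty (lt_asymm ht),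
        measure_empty, add_zero, Fs.measure_Iic hFs_bot, Fl.measure_Iic hFl_bot,
        StieltjesFunction.piecewise_apply, if_pos ht]
    · rw [Ioi_inter_Iio, Ioo_eq_empty ht, inter_eq_left.2 (Ioi_subset_Ioi (not_lt.1 ht)),
        measure_empty, zero_add, Fs.measure_Ioi hFs_top, Fu.measure_Ioi hFu_top,
        StieltjesFunction.piecewise_apply, if_neg ht]
  have hD := le_antisymm
    (integral_sub_le_of_measure_beyond_le hcont hmono hanti Fs.measure μ
      (hint _) (hint _) fun t => (hlayer t).le)
    (integral_sub_le_of_measure_beyond_le hcont hmono hanti μ Fs.measure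
      (hint _) (hint _) fun t => (hlayer t).ge)
  have hFl_mass : (Fl.measure.restrict (Iio a)).real univ = Fl a := by
    rw [measureReal_restrict_apply_univ, measureReal_def, Fl.measure_Iio hFl_bot,
      hFla.continuousWithinAt.leftLim_eq, sub_zero,
      ENNReal.toReal_ofReal (Fl.mono.le_of_tendsto hFl_bot a)]
  have hFu_mass : (Fu.measure.restrict (Ioi a)).real univ = 1 - Fu a := by
    rw [measureReal_restrict_apply_univ, measureReal_def, Fu.measure_Ioi hFu_top,
      ENNReal.toReal_ofReal (sub_nonneg.2 (Fu.mono.ge_of_tendsto hFu_top a))]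
  rw [integral_const_sub (hint _),
    integral_const_sub (hint _), probReal_univ, measureReal_add_apply,
    hFl_mass, hFu_mass,
    integral_add_measure (hint _) (hint _)] at hD
  linarith

theorem upper_expectation_one_maximum_general
    (Fl Fu : StieltjesFunction ℝ)
    (hFl : Tendsto Fl atBot (nhds 0) ∧ Tendsto Fl atTop (nhds 1))
    (hFu : Tendsto Fu atBot (nhds 0) ∧ Tendsto Fu atTop (nhds 1))
    (hle : ∀ x, Fl x ≤ Fu x)
    (hFlc : Continuous Fl)
    (h : ℝ → ℝ) (hcont : Continuous h) (C : ℝ) (hbd : ∀ x, |h x| ≤ C)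
    (a : ℝ) (hinc : StrictMonoOn h (Iic a)) (hdec : StrictAntiOn h (Ici a))
    (Φ : Set (StieltjesFunction ℝ))
    (hΦ : Φ = {F : StieltjesFunction ℝ |
        (Tendsto F atBot (nhds 0) ∧ Tendsto F atTop (nhds 1)) ∧
          ∀ x, Fl x ≤ F x ∧ F x ≤ Fu x}) :
    IsGreatest ((fun F : StieltjesFunction ℝ => ∫ x, h x ∂F.measure) '' Φ)
      ((∫ x in Iio a, h x ∂Fl.measure) + h a * (Fu a - Fl a)
        + ∫ x in Ioi a, h x ∂Fu.measure) ∧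
    ∃ Fstar ∈ Φ, (∀ x, Fstar x = if x < a then Fl x else Fu x) ∧
      ∫ x, h x ∂Fstar.measure
        = (∫ x in Iio a, h x ∂Fl.measure) + h a * (Fu a - Fl a)
          + ∫ x in Ioi a, h x ∂Fu.measure := by
  obtain ⟨hFl_bot, hFl_top⟩ := hFl
  obtain ⟨hFu_bot, hFu_top⟩ := hFu
  set Fs := Fl.piecewise Fu a (hle a)
  have hFs_mem : Fs ∈ Φ := by
    rw [hΦ]
    refine ⟨⟨Fl.tendsto_piecewise_atBot Fu a _ hFl_bot,
      Fl.tendsto_piecewise_atTop Fu a _ hFu_top⟩, fun x => ?_⟩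
    rw [StieltjesFunction.piecewise_apply]
    split_ifs
    exacts [⟨le_rfl, hle x⟩, ⟨hle x, le_rfl⟩]
  have hval := integral_piecewise hcont hinc.monotoneOn hdec.antitoneOn hbd hFl_bot hFl_top
    hFu_bot hFu_top hFlc.continuousAt (hle a)
  refine ⟨⟨⟨Fs, hFs_mem, hval⟩, ?_⟩, Fs, hFs_mem, fun _ => rfl, hval⟩
  rintro _ ⟨F, hF, rfl⟩
  rw [hΦ] at hF
  obtain ⟨⟨hF_bot, hF_top⟩, hF_between⟩ := hF
  exact hval ▸ integral_le_integral_piecewise hcont hinc.monotoneOn hdec.antitoneOn hbd hFl_bot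
    hFu_top hF_bot hF_top (fun x => (hF_between x).1) (fun x => (hF_between x).2) (hle a)

/-- Upper expectation of a function with a single maximum at `a`:
it equals `∫_{-∞}^a h dF̲ + h(a)(F̄(a)−F̲(a)) + ∫_a^∞ h dF̄` and is attained by
the distribution following `F̲` before `a` and `F̄` from `a` on. -/
theorem upper_expectation_one_maximum
    (Fl Fu : StieltjesFunction ℝ)
    (hFl : Tendsto Fl atBot (nhds 0) ∧ Tendsto Fl atTop (nhds 1))
    (hFu : Tendsto Fu atBot (nhds 0) ∧ Tendsto Fu atTop (nhds 1))
    (hle : ∀ x, Fl x ≤ Fu x)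
    (hFlc : Continuous Fl) (hFuc : Continuous Fu)
    (hFlsm : StrictMonoOn Fl {x | 0 < Fl x ∧ Fl x < 1})
    (hFusm : StrictMonoOn Fu {x | 0 < Fu x ∧ Fu x < 1})
    (h : ℝ → ℝ) (hcont : Continuous h) (C : ℝ) (hbd : ∀ x, |h x| ≤ C)
    (a : ℝ) (hinc : StrictMonoOn h (Iic a)) (hdec : StrictAntiOn h (Ici a))
    (Φ : Set (StieltjesFunction ℝ))
    (hΦ : Φ = {F : StieltjesFunction ℝ |
        (Tendsto F atBot (nhds 0) ∧ Tendsto F atTop (nhds 1)) ∧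
          ∀ x, Fl x ≤ F x ∧ F x ≤ Fu x}) :
    IsGreatest ((fun F : StieltjesFunction ℝ => ∫ x, h x ∂F.measure) '' Φ)
      ((∫ x in Iio a, h x ∂Fl.measure) + h a * (Fu a - Fl a)
        + ∫ x in Ioi a, h x ∂Fu.measure) ∧
    ∃ Fstar ∈ Φ, (∀ x, Fstar x = if x < a then Fl x else Fu x) ∧
      ∫ x, h x ∂Fstar.measure
        = (∫ x in Iio a, h x ∂Fl.measure) + h a * (Fu a - Fl a)
          + ∫ x in Ioi a, h x ∂Fu.measure :=
  upper_expectation_one_maximum_general Fl Fu hFl hFu hle hFlc h hcont C hbd a hinc hdec Φ hΦ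
end

section
/- Let [F̲,F̄] be a p-box, B = [b₀,b₁] with F̲(b₁) > F̄(b₀), and h continuous, bounded and monotone non-decreasing, with F̲ continuous strictly increasing. Then the upper conditional expectation of h given B over Φ(F̲,F̄) equals (1/(F̄(b₁) − F̄(b₀))) · ( ∫_{F̲⁻¹(F̄(b₀))}^{b₁} h dF̲ + h(b₁)·(F̄(b₁) − F̲(b₁)) ). -/
/-!
For `F` in the p-box, the conditional law of `F` on `(b₀, b₁]` is stochastically dominated by the
law that puts mass `dFl` on `(c, b₁)`, where `Fl c = Fu b₀`, and the remaining mass at `b₁`: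
its distribution function is smallest at every point. A non-decreasing `h` therefore has the largest
conditional expectation under the latter; the comparison of integrals is the layer-cake formula
applied to `h b₁ - h`, whose superlevel sets are closed lower sets. The maximum is attained by the
distribution function that equals `Fu` off `[b₀, b₁)`, stays at `Fu b₀` up to `c` and follows `Fl`
on `[c, b₁)`.
-/

open Set Filter MeasureTheory

theorem measure_le_of_isLowerSet_of_isClosed {μ ν : Measure ℝ}
    (hνμ : ∀ s, ν (Iic s) ≤ μ (Iic s)) {S : Set ℝ} (hS : IsLowerSet S) (hSc : IsClosed S) :
    ν S ≤ μ S := by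
  rcases S.eq_empty_or_nonempty with rfl | hne
  · simp
  by_cases hbdd : BddAbove S
  · have hIic : S = Iic (sSup S) :=
      Subset.antisymm (fun _ hx => le_csSup hbdd hx) fun _ hx => hS hx (hSc.csSup_mem hne hbdd)
    rw [hIic]
    exact hνμ _
  · have huniv : S = univ := eq_univ_of_forall fun x => by
      obtain ⟨y, hy, hxy⟩ := not_bddAbove_iff.1 hbdd x
      exact hS hxy.le hy
    rw [huniv]
    exact le_of_tendsto_of_tendsto' (tendsto_measure_Iic_atTop ν) (tendsto_measure_Iic_atTop μ) hνμ

theorem Antitone.integral_le_integral_of_measure_Iic_le {μ ν : Measure ℝ} {g : ℝ → ℝ}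
    (hg_anti : Antitone g) (hg : Continuous g) (hgμ : 0 ≤ᵐ[μ] g) (hgν : 0 ≤ᵐ[ν] g)
    (hint : Integrable g μ) (hνμ : ∀ s, ν (Iic s) ≤ μ (Iic s)) :
    ∫ x, g x ∂ν ≤ ∫ x, g x ∂μ := by
  have hsuperlevel : ∀ t, ν {x | t ≤ g x} ≤ μ {x | t ≤ g x} := fun t =>
    measure_le_of_isLowerSet_of_isClosed hνμ (fun _ _ hba ha => ha.trans (hg_anti hba))
      (isClosed_le continuous_const hg)
  rw [integral_eq_lintegral_of_nonneg_ae hgν hg.aestronglyMeasurable,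
    integral_eq_lintegral_of_nonneg_ae hgμ hg.aestronglyMeasurable]
  refine ENNReal.toReal_mono hint.lintegral_lt_top.ne ?_
  rw [lintegral_eq_lintegral_meas_le ν hgν hg.aemeasurable,
    lintegral_eq_lintegral_meas_le μ hgμ hg.aemeasurable]
  exact lintegral_mono hsuperlevel

namespace StieltjesFunction

instance isFiniteMeasure_restrict_Ioc (F : StieltjesFunction ℝ) (a b : ℝ) :
    IsFiniteMeasure (F.measure.restrict (Ioc a b)) :=
  isFiniteMeasure_restrict.2 (by rw [F.measure_Ioc]; exact ENNReal.ofReal_ne_top)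

theorem measure_restrict_Ioc_Iic (F : StieltjesFunction ℝ) (a b s : ℝ) :
    F.measure.restrict (Ioc a b) (Iic s) = ENNReal.ofReal (F (min b s) - F a) := by
  rw [Measure.restrict_apply measurableSet_Iic, inter_comm, Ioc_inter_Iic, F.measure_Ioc]

theorem setIntegral_Ioc_const_sub (F : StieltjesFunction ℝ) {a b : ℝ} (hab : a ≤ b)
    {h : ℝ → ℝ} (hh : Continuous h) (k : ℝ) :
    ∫ x in Ioc a b, (k - h x) ∂F.measure = k * (F b - F a) - ∫ x in Ioc a b, h x ∂F.measure := by
  rw [integral_sub (integrable_const k) hh.integrableOn_Ioc, setIntegral_const, measureReal_def,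
    F.measure_Ioc, ENNReal.toReal_ofReal (sub_nonneg.2 (F.mono hab)), smul_eq_mul, mul_comm]

end StieltjesFunction

section PBox

variable {Fl Fu F : StieltjesFunction ℝ} {b₀ b₁ c : ℝ}

theorem pbox_smul_measure_Iic_le (hle : ∀ x, Fl x ≤ Fu x)
    (hF : ∀ x, Fl x ≤ F x ∧ F x ≤ Fu x) (hc : Fl c = Fu b₀) (s : ℝ) :
    (ENNReal.ofReal (F b₁ - F b₀) • Fl.measure.restrict (Ioc c b₁)) (Iic s)
      ≤ (ENNReal.ofReal (Fu b₁ - Fu b₀) • F.measure.restrict (Ioc b₀ b₁)) (Iic s) := by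
  simp only [Measure.smul_apply, smul_eq_mul, StieltjesFunction.measure_restrict_Ioc_Iic, hc]
  set t := min b₁ s
  rcases le_or_gt (Fl t) (Fu b₀) with hlow | hhigh
  · rw [ENNReal.ofReal_of_nonpos (sub_nonpos.2 hlow), mul_zero]
    exact zero_le
  have hlu : Fl t ≤ Fu b₁ := (Fl.mono (min_le_left _ _)).trans (hle b₁)
  obtain ⟨hlf, -⟩ := hF t
  obtain ⟨hly, hyu⟩ := hF b₁
  obtain ⟨-, hxu⟩ := hF b₀
  have hlb : Fl t ≤ Fl b₁ := Fl.mono (min_le_left _ _)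
  rw [← ENNReal.ofReal_mul (by linarith), ← ENNReal.ofReal_mul (by linarith)]
  refine ENNReal.ofReal_le_ofReal ?_
  -- `(Fu b₁ - Fu b₀) (Fl t - F b₀) - (F b₁ - F b₀) (Fl t - Fu b₀)` is the sum of the first two
  nlinarith [mul_nonneg (sub_nonneg.2 hyu) (sub_nonneg.2 hhigh.le),
    mul_nonneg (sub_nonneg.2 hxu) (sub_nonneg.2 hlu),
    mul_nonneg (sub_nonneg.2 (hhigh.le.trans hlu)) (sub_nonneg.2 hlf)]

theorem pbox_conditional_expectation_le (hle : ∀ x, Fl x ≤ Fu x)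
    (hF : ∀ x, Fl x ≤ F x ∧ F x ≤ Fu x) (hc : Fl c = Fu b₀) (hpos : Fu b₀ < Fl b₁)
    {h : ℝ → ℝ} (hcont : Continuous h) (hmono : Monotone h) :
    (∫ x in Ioc b₀ b₁, h x ∂F.measure) / (F b₁ - F b₀)
      ≤ (Fu b₁ - Fu b₀)⁻¹ *
        ((∫ x in Ioc c b₁, h x ∂Fl.measure) + h b₁ * (Fu b₁ - Fl b₁)) := by
  have hcb : c ≤ b₁ := (Fl.mono.reflect_lt (hc ▸ hpos)).le
  have hb : b₀ ≤ b₁ := (Fl.mono.reflect_lt ((hle b₀).trans_lt hpos)).le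
  have hd : 0 < F b₁ - F b₀ := by linarith [(hF b₀).2, (hF b₁).1]
  have hD : 0 < Fu b₁ - Fu b₀ := by linarith [hle b₁]
  have hg_nonneg : ∀ a, ∀ x ∈ Ioc a b₁, 0 ≤ h b₁ - h x := fun _ _ hx => sub_nonneg.2 (hmono hx.2)
  have hdom := Antitone.integral_le_integral_of_measure_Iic_le
    (μ := ENNReal.ofReal (Fu b₁ - Fu b₀) • F.measure.restrict (Ioc b₀ b₁))
    (ν := ENNReal.ofReal (F b₁ - F b₀) • Fl.measure.restrict (Ioc c b₁))
    (fun _ _ hxy => sub_le_sub_left (hmono hxy) _) (continuous_const.sub hcont)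
    (Measure.ae_smul_measure (ae_restrict_of_forall_mem measurableSet_Ioc (hg_nonneg b₀)) _)
    (Measure.ae_smul_measure (ae_restrict_of_forall_mem measurableSet_Ioc (hg_nonneg c)) _)
    ((continuous_const.sub hcont).integrableOn_Ioc.smul_measure ENNReal.ofReal_ne_top)
    (pbox_smul_measure_Iic_le hle hF hc)
  rw [integral_smul_measure, integral_smul_measure, ENNReal.toReal_ofReal hd.le,
    ENNReal.toReal_ofReal hD.le, F.setIntegral_Ioc_const_sub hb hcont,
    Fl.setIntegral_Ioc_const_sub hcb hcont, hc, smul_eq_mul, smul_eq_mul] at hdom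
  rw [div_le_iff₀ hd, inv_mul_eq_div, div_mul_eq_mul_div, le_div_iff₀ hD]
  linarith

end PBox

namespace StieltjesFunction

noncomputable def pboxMaximizer (Fl Fu : StieltjesFunction ℝ) (b₀ b₁ : ℝ) :
    StieltjesFunction ℝ where
  toFun x := if x < b₁ then min (Fu x) (max (Fu b₀) (Fl x)) else Fu x
  mono' x y hxy := by
    by_cases hy : y < b₁
    · simp only [hxy.trans_lt hy, hy, if_true]
      exact min_le_min (Fu.mono hxy) (max_le_max le_rfl (Fl.mono hxy))
    · simp only [hy, if_false]
      split_ifs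
      · exact (min_le_left _ _).trans (Fu.mono hxy)
      · exact Fu.mono hxy
  right_continuous' x := by
    by_cases hx : x < b₁
    · refine ContinuousWithinAt.congr_of_eventuallyEq ?_
        (eventually_nhdsWithin_of_eventually_nhds
          ((eventually_lt_nhds hx).mono fun _ hy => if_pos hy))
        (if_pos hx)
      exact (Fu.right_continuous x).min
        (continuousWithinAt_const.max (Fl.right_continuous x))
    · exact (Fu.right_continuous x).congr (fun y hy => if_neg (not_lt.2 ((not_lt.1 hx).trans hy)))
        (if_neg hx)

variable {Fl Fu : StieltjesFunction ℝ} {b₀ b₁ c : ℝ}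

theorem pboxMaximizer_apply_of_lt {x : ℝ} (hx : x < b₁) :
    pboxMaximizer Fl Fu b₀ b₁ x = min (Fu x) (max (Fu b₀) (Fl x)) := if_pos hx

theorem pboxMaximizer_apply_of_le_left {x : ℝ} (hx : x ≤ b₀) :
    pboxMaximizer Fl Fu b₀ b₁ x = Fu x := by
  change ite _ _ _ = _
  split_ifs
  · exact min_eq_left ((Fu.mono hx).trans (le_max_left _ _))
  · rfl

theorem pboxMaximizer_apply_of_le_right {x : ℝ} (hx : b₁ ≤ x) :
    pboxMaximizer Fl Fu b₀ b₁ x = Fu x := if_neg (not_lt.2 hx)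

theorem le_pboxMaximizer (hle : ∀ x, Fl x ≤ Fu x) (x : ℝ) :
    Fl x ≤ pboxMaximizer Fl Fu b₀ b₁ x ∧ pboxMaximizer Fl Fu b₀ b₁ x ≤ Fu x := by
  rcases lt_or_ge x b₁ with hx | hx
  · rw [pboxMaximizer_apply_of_lt hx]
    exact ⟨le_min (hle x) (le_max_right _ _), min_le_left _ _⟩
  · rw [pboxMaximizer_apply_of_le_right hx]
    exact ⟨hle x, le_rfl⟩

theorem tendsto_pboxMaximizer_atBot (hFu : Tendsto Fu atBot (nhds 0)) :
    Tendsto (pboxMaximizer Fl Fu b₀ b₁) atBot (nhds 0) :=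
  hFu.congr' (eventually_atBot.2 ⟨b₀, fun _ hx => (pboxMaximizer_apply_of_le_left hx).symm⟩)

theorem tendsto_pboxMaximizer_atTop (hFu : Tendsto Fu atTop (nhds 1)) :
    Tendsto (pboxMaximizer Fl Fu b₀ b₁) atTop (nhds 1) :=
  hFu.congr' (eventually_atTop.2 ⟨b₁, fun _ hx => (pboxMaximizer_apply_of_le_right hx).symm⟩)

theorem pboxMaximizer_measure_restrict (hle : ∀ x, Fl x ≤ Fu x) (hc : Fl c = Fu b₀)
    (hcb : c ≤ b₁) :
    (pboxMaximizer Fl Fu b₀ b₁).measure.restrict (Ioc b₀ b₁)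
      = Fl.measure.restrict (Ioc c b₁) + ENNReal.ofReal (Fu b₁ - Fl b₁) • Measure.dirac b₁ := by
  refine Measure.ext_of_Iic _ _ fun s => ?_
  rw [Measure.add_apply, Measure.smul_apply, measure_restrict_Ioc_Iic, measure_restrict_Ioc_Iic,
    pboxMaximizer_apply_of_le_left le_rfl, hc, smul_eq_mul]
  rcases lt_or_ge s b₁ with hs | hs
  · rw [min_eq_right hs.le, pboxMaximizer_apply_of_lt hs,
      Measure.dirac_apply' _ measurableSet_Iic, indicator_of_notMem (s := Iic s) (not_le.2 hs),
      mul_zero, add_zero]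
    rcases le_or_gt (Fl s) (Fu b₀) with hlow | hhigh
    · rw [ENNReal.ofReal_of_nonpos (sub_nonpos.2 hlow), ENNReal.ofReal_of_nonpos
        (sub_nonpos.2 ((min_le_right _ _).trans (max_eq_left hlow).le))]
    · rw [max_eq_right hhigh.le, min_eq_right (hle s)]
  · rw [min_eq_left hs, pboxMaximizer_apply_of_le_right le_rfl,
      Measure.dirac_apply_of_mem (mem_Iic.2 hs), mul_one,
      ← ENNReal.ofReal_add (by rw [← hc]; exact sub_nonneg.2 (Fl.mono hcb))
        (sub_nonneg.2 (hle b₁))]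
    ring_nf

theorem setIntegral_pboxMaximizer (hle : ∀ x, Fl x ≤ Fu x) (hc : Fl c = Fu b₀)
    (hcb : c ≤ b₁) {h : ℝ → ℝ} (hcont : Continuous h) :
    ∫ x in Ioc b₀ b₁, h x ∂(pboxMaximizer Fl Fu b₀ b₁).measure
      = (∫ x in Ioc c b₁, h x ∂Fl.measure) + h b₁ * (Fu b₁ - Fl b₁) := by
  rw [pboxMaximizer_measure_restrict hle hc hcb, integral_add_measure hcont.integrableOn_Ioc
      ((integrable_dirac enorm_lt_top).smul_measure ENNReal.ofReal_ne_top),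
    integral_smul_measure, integral_dirac, ENNReal.toReal_ofReal (sub_nonneg.2 (hle b₁)),
    smul_eq_mul, mul_comm]

end StieltjesFunction

theorem upper_conditional_expectation_monotone_general
    (Fl Fu : StieltjesFunction ℝ)
    (hFl : Tendsto Fl atBot (nhds 0) ∧ Tendsto Fl atTop (nhds 1))
    (hFu : Tendsto Fu atBot (nhds 0) ∧ Tendsto Fu atTop (nhds 1))
    (hle : ∀ x, Fl x ≤ Fu x)
    (hFlc : Continuous Fl) (hFlsm : StrictMono Fl)
    (b₀ b₁ : ℝ) (hpos : Fu b₀ < Fl b₁)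
    (h : ℝ → ℝ) (hcont : Continuous h)
    (hmono : Monotone h)
    (Φ : Set (StieltjesFunction ℝ))
    (hΦ : Φ = {F : StieltjesFunction ℝ |
        (Tendsto F atBot (nhds 0) ∧ Tendsto F atTop (nhds 1)) ∧
          ∀ x, Fl x ≤ F x ∧ F x ≤ Fu x}) :
    sSup ((fun F : StieltjesFunction ℝ =>
        (∫ x in Ioc b₀ b₁, h x ∂F.measure) / (F b₁ - F b₀)) '' Φ)
      = (Fu b₁ - Fu b₀)⁻¹ *
        ((∫ x in Ioc (sInf {x : ℝ | Fu b₀ ≤ Fl x}) b₁, h x ∂Fl.measure)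
          + h b₁ * (Fu b₁ - Fl b₁)) := by
  have hFu₀ : 0 < Fu b₀ := calc
    0 ≤ Fl (b₀ - 1) := Fl.mono.le_of_tendsto hFl.1 _
    _ < Fl b₀ := hFlsm (sub_one_lt b₀)
    _ ≤ Fu b₀ := hle b₀
  obtain ⟨a, ha⟩ := (hFl.1.eventually (gt_mem_nhds hFu₀)).exists
  obtain ⟨c, hc⟩ := intermediate_value_univ a b₁ hFlc ⟨ha.le, hpos.le⟩
  have hcInf : sInf {x | Fu b₀ ≤ Fl x} = c := by
    simp only [← hc, hFlsm.le_iff_le]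
    exact csInf_Ici
  have hcb : c ≤ b₁ := hFlsm.le_iff_le.1 (hc ▸ hpos.le)
  have hGΦ : StieltjesFunction.pboxMaximizer Fl Fu b₀ b₁ ∈ Φ :=
    hΦ ▸ ⟨⟨StieltjesFunction.tendsto_pboxMaximizer_atBot hFu.1,
      StieltjesFunction.tendsto_pboxMaximizer_atTop hFu.2⟩, StieltjesFunction.le_pboxMaximizer hle⟩
  rw [hcInf]
  refine IsGreatest.csSup_eq ⟨⟨_, hGΦ, ?_⟩, ?_⟩
  · dsimp only
    rw [StieltjesFunction.setIntegral_pboxMaximizer hle hc hcb hcont,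
      StieltjesFunction.pboxMaximizer_apply_of_le_right le_rfl,
      StieltjesFunction.pboxMaximizer_apply_of_le_left le_rfl, inv_mul_eq_div]
  · rintro _ ⟨F, hF, rfl⟩
    rw [hΦ] at hF
    exact pbox_conditional_expectation_le hle hF.2 hc hpos hcont hmono

/-- Closed form for the upper conditional expectation of a
monotone non-decreasing `h` given `B = [b₀,b₁]`. -/
theorem upper_conditional_expectation_monotone
    (Fl Fu : StieltjesFunction ℝ)
    (hFl : Tendsto Fl atBot (nhds 0) ∧ Tendsto Fl atTop (nhds 1))
    (hFu : Tendsto Fu atBot (nhds 0) ∧ Tendsto Fu atTop (nhds 1))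
    (hle : ∀ x, Fl x ≤ Fu x)
    (hFlc : Continuous Fl) (hFlsm : StrictMono Fl)
    (b₀ b₁ : ℝ) (hb : b₀ ≤ b₁) (hpos : Fu b₀ < Fl b₁)
    (h : ℝ → ℝ) (hcont : Continuous h) (C : ℝ) (hbd : ∀ x, |h x| ≤ C)
    (hmono : Monotone h)
    (Φ : Set (StieltjesFunction ℝ))
    (hΦ : Φ = {F : StieltjesFunction ℝ |
        (Tendsto F atBot (nhds 0) ∧ Tendsto F atTop (nhds 1)) ∧
          ∀ x, Fl x ≤ F x ∧ F x ≤ Fu x}) :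
    sSup ((fun F : StieltjesFunction ℝ =>
        (∫ x in Ioc b₀ b₁, h x ∂F.measure) / (F b₁ - F b₀)) '' Φ)
      = (Fu b₁ - Fu b₀)⁻¹ *
        ((∫ x in Ioc (sInf {x : ℝ | Fu b₀ ≤ Fl x}) b₁, h x ∂Fl.measure)
          + h b₁ * (Fu b₁ - Fl b₁)) :=
  upper_conditional_expectation_monotone_general Fl Fu hFl hFu hle hFlc hFlsm b₀ b₁ hpos h hcont
    hmono Φ hΦ
end

section
/- Let [F̲,F̄] be a p-box, B = [b₀,b₁] with F̲(b₁) > F̄(b₀), and h continuous, bounded and monotone non-decreasing, with F̄ continuous strictly increasing. Then the lower conditional expectation of h given B over Φ(F̲,F̄) equals (1/(F̲(b₁) − F̲(b₀))) · ( h(b₀)·(F̄(b₀) − F̲(b₀)) + ∫_{b₀}^{F̄⁻¹(F̲(b₁))} h dF̄ ). -/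
/-!
Integrating by parts,
`∫_{(b₀,b₁]} h dF / (F b₁ - F b₀) = h b₀ + ∫_{(b₀,b₁]} (F b₁ - F t) dh(t) / (F b₁ - F b₀)`,
and for `Fl ≤ F ≤ Fu` a pointwise estimate bounds the last ratio below by
`∫_{(b₀,b₁]} (Fl b₁ - Fu t)⁺ dh(t) / (Fl b₁ - Fl b₀)`. The bound is not attained: the paper's
minimiser has an atom at `b₀`, which `Ioc b₀ b₁` does not see. Moving that atom to `c > b₀`
gives distributions `clampFrom Fl Fu c (Fl b₁)` in the p-box exceeding the bound by at most
`h c - h b₀`, which vanishes as `c ↓ b₀`. Integrating by parts once more, on `(b₀, β]` with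
`Fu β = Fl b₁`, turns the bound into the closed form.
-/

open Set Filter MeasureTheory Topology

theorem Antitone.integrableOn_Ioc {f : ℝ → ℝ} (hf : Antitone f) (μ : Measure ℝ)
    [IsFiniteMeasureOnCompacts μ] (a b : ℝ) : IntegrableOn f (Ioc a b) μ :=
  ((hf.antitoneOn _).integrableOn_isCompact isCompact_Icc).mono_set Ioc_subset_Icc_self

theorem Monotone.csInf_setOf_le_mem_Icc {f : ℝ → ℝ} (hf : Monotone f) (hfc : Continuous f)
    {a b y : ℝ} (ha : f a < y) (hb : y ≤ f b) :
    sInf {x | y ≤ f x} ∈ Icc a b ∧ f (sInf {x | y ≤ f x}) = y := by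
  set S := {x | y ≤ f x}
  have hlower : a ∈ lowerBounds S := fun x hx => hf.reflect_lt (ha.trans_le hx) |>.le
  have hβS : sInf S ∈ S := (isClosed_le continuous_const hfc).csInf_mem ⟨b, hb⟩ ⟨a, hlower⟩
  have haβ : a ≤ sInf S := le_csInf ⟨b, hb⟩ hlower
  refine ⟨⟨haβ, csInf_le ⟨a, hlower⟩ hb⟩, ?_⟩
  -- an intermediate value point in `[a, sInf S]` lies in `S`, so it is `sInf S`
  obtain ⟨x, hx, hxy⟩ := intermediate_value_Icc haβ hfc.continuousOn ⟨ha.le, hβS⟩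
  rwa [le_antisymm hx.2 (csInf_le ⟨a, hlower⟩ hxy.ge)] at hxy

theorem Monotone.setIntegral_Ioc_posPart_sub {f : ℝ → ℝ} (hf : Monotone f) (μ : Measure ℝ)
    [IsFiniteMeasureOnCompacts μ] {a β b : ℝ} (haβ : a ≤ β) (hβb : β ≤ b) :
    ∫ t in Ioc a b, (f β - f t)⁺ ∂μ = ∫ t in Ioc a β, (f β - f t) ∂μ := by
  have hanti : Antitone fun t => (f β - f t)⁺ := fun s t hst =>
    posPart_mono (sub_le_sub_left (hf hst) _)
  rw [← Ioc_union_Ioc_eq_Ioc haβ hβb, setIntegral_union (Ioc_disjoint_Ioc_of_le le_rfl)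
    measurableSet_Ioc (hanti.integrableOn_Ioc μ a β) (hanti.integrableOn_Ioc μ β b)]
  have hleft : ∫ t in Ioc a β, (f β - f t)⁺ ∂μ = ∫ t in Ioc a β, (f β - f t) ∂μ :=
    setIntegral_congr_fun measurableSet_Ioc fun t ht =>
      posPart_eq_self.2 (sub_nonneg.2 (hf ht.2))
  have hright : ∫ t in Ioc β b, (f β - f t)⁺ ∂μ = 0 :=
    setIntegral_eq_zero_of_forall_eq_zero fun t ht =>
      posPart_eq_zero.2 (sub_nonpos.2 (hf ht.1.le))
  rw [hleft, hright, add_zero]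

theorem setIntegral_posPart_sub_mul_le {Fl F Fu : ℝ → ℝ} (hFl : Monotone Fl) (hF : Monotone F)
    (hFu : Monotone Fu) (hlo : ∀ x, Fl x ≤ F x) (hup : ∀ x, F x ≤ Fu x) (μ : Measure ℝ)
    [IsFiniteMeasureOnCompacts μ] (a b : ℝ) :
    (∫ t in Ioc a b, (Fl b - Fu t)⁺ ∂μ) * (F b - F a) ≤
      (∫ t in Ioc a b, (F b - F t) ∂μ) * (Fl b - Fl a) := by
  have hpoint : ∀ t ∈ Ioc a b,
      (Fl b - Fu t)⁺ * (F b - F a) ≤ (F b - F t) * (Fl b - Fl a) := by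
    intro t ht
    have hFt : F t ≤ F b := hF ht.2
    have hDl : 0 ≤ Fl b - Fl a := sub_nonneg.2 (hFl (ht.1.le.trans ht.2))
    rcases le_total (Fl b - Fu t) 0 with hneg | hnonneg
    · rw [posPart_eq_zero.2 hneg, zero_mul]
      exact mul_nonneg (sub_nonneg.2 hFt) hDl
    · have hFua : Fl a ≤ Fu t := ((hlo a).trans (hup a)).trans (hFu ht.1.le)
      rw [posPart_eq_self.2 hnonneg]
      -- `Fl b - Fu t ≤ Fl b - Fl a` and `F b - F a ≤ (Fl b - Fl a) + (F b - Fl b)`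
      nlinarith [hlo a, hlo b, hup t]
  have hposPart : Antitone fun t => (Fl b - Fu t)⁺ := fun s t hst =>
    posPart_mono (sub_le_sub_left (hFu hst) _)
  have hsub : Antitone fun t => F b - F t := fun s t hst => sub_le_sub_left (hF hst) _
  rw [← integral_mul_const, ← integral_mul_const]
  exact setIntegral_mono_on ((hposPart.integrableOn_Ioc μ a b).mul_const _)
    ((hsub.integrableOn_Ioc μ a b).mul_const _) measurableSet_Ioc hpoint

namespace StieltjesFunction

theorem lintegral_Ioc_ofReal_sub_eq (F H : StieltjesFunction ℝ) (hH : Continuous H) (a b : ℝ) :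
    ∫⁻ x in Ioc a b, ENNReal.ofReal (H x - H a) ∂F.measure =
      ∫⁻ t in Ioc a b, ENNReal.ofReal (F b - F t) ∂H.measure := by
  -- both sides are the `F.measure ⊗ H.measure`-mass of the triangle `a < t < x ≤ b`
  set T : Set (ℝ × ℝ) := {p | a < p.2 ∧ p.2 < p.1}
  have hT : MeasurableSet T := (measurableSet_lt measurable_const measurable_snd).inter
    (measurableSet_lt measurable_snd measurable_fst)
  calc _ = (F.measure.restrict (Ioc a b)).prod (H.measure.restrict (Ioc a b)) T := by
        rw [Measure.prod_apply hT]
        refine setLIntegral_congr_fun measurableSet_Ioc fun x hx => ?_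
        rw [show Prod.mk x ⁻¹' T = Ioo a x from rfl, Measure.restrict_apply measurableSet_Ioo,
          inter_eq_self_of_subset_left (Ioo_subset_Ioc_self.trans (Ioc_subset_Ioc_right hx.2)),
          measure_Ioo, hH.continuousWithinAt.leftLim_eq]
    _ = _ := by
        rw [Measure.prod_apply_symm hT]
        refine setLIntegral_congr_fun measurableSet_Ioc fun t ht => ?_
        have hslice : (fun x => (x, t)) ⁻¹' T ∩ Ioc a b = Ioc t b := by
          ext x
          simp only [T, mem_inter_iff, mem_preimage, mem_ofPred_eq, mem_Ioc, ht.1, true_and]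
          exact ⟨fun h => ⟨h.1, h.2.2⟩, fun h => ⟨h.1, ht.1.trans h.1, h.2⟩⟩
        rw [Measure.restrict_apply (hT.preimage measurable_prodMk_right), hslice, measure_Ioc]

theorem setIntegral_Ioc_integration_by_parts (F H : StieltjesFunction ℝ) (hH : Continuous H)
    {a b : ℝ} (hab : a ≤ b) :
    ∫ x in Ioc a b, H x ∂F.measure =
      H a * (F b - F a) + ∫ t in Ioc a b, (F b - F t) ∂H.measure := by
  have hsub : ∫ x in Ioc a b, (H x - H a) ∂F.measure =
      ∫ t in Ioc a b, (F b - F t) ∂H.measure := by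
    rw [integral_eq_lintegral_of_nonneg_ae, integral_eq_lintegral_of_nonneg_ae,
      lintegral_Ioc_ofReal_sub_eq F H hH]
    · exact ae_restrict_of_forall_mem measurableSet_Ioc fun t ht => sub_nonneg.2 (F.mono ht.2)
    · exact (measurable_const.sub F.mono.measurable).aestronglyMeasurable
    · exact ae_restrict_of_forall_mem measurableSet_Ioc fun x hx => sub_nonneg.2 (H.mono hx.1.le)
    · exact (hH.sub continuous_const).aestronglyMeasurable
  rw [← hsub, integral_sub hH.integrableOn_Ioc (integrableOn_const measure_Ioc_lt_top.ne),
    setIntegral_const, measureReal_def, measure_Ioc,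
    ENNReal.toReal_ofReal (sub_nonneg.2 (F.mono hab)), smul_eq_mul]
  ring

theorem setIntegral_Ioc_div_eq (F H : StieltjesFunction ℝ) (hH : Continuous H) {a b : ℝ}
    (hF : F a < F b) :
    (∫ x in Ioc a b, H x ∂F.measure) / (F b - F a) =
      H a + (∫ t in Ioc a b, (F b - F t) ∂H.measure) / (F b - F a) := by
  rw [setIntegral_Ioc_integration_by_parts F H hH (F.mono.reflect_lt hF).le, add_div,
    mul_div_cancel_right₀ _ (sub_pos.2 hF).ne']

noncomputable def clampFrom (Fl Fu : StieltjesFunction ℝ) (c m : ℝ) : StieltjesFunction ℝ where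
  toFun x := if x < c then Fl x else max (Fl x) (min (Fu x) m)
  mono' x y hxy := by
    by_cases hy : y < c
    · simp only [hxy.trans_lt hy, hy, if_true]
      exact Fl.mono hxy
    by_cases hx : x < c
    · simp only [hx, hy, if_true, if_false]
      exact (Fl.mono hxy).trans (le_max_left _ _)
    · simp only [hx, hy, if_false]
      exact max_le_max (Fl.mono hxy) (min_le_min_right m (Fu.mono hxy))
  right_continuous' x := by
    by_cases hx : x < c
    · refine (Fl.right_continuous x).congr_of_eventuallyEq ?_ (if_pos hx)
      filter_upwards [nhdsWithin_le_nhds (eventually_lt_nhds hx)] with y hy using if_pos hy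
    · refine ContinuousWithinAt.congr
        ((Fl.right_continuous x).max ((Fu.right_continuous x).min continuousWithinAt_const))
        (fun y hy => if_neg fun hyc => hx ((mem_Ici.1 hy).trans_lt hyc)) (if_neg hx)

variable {Fl Fu : StieltjesFunction ℝ} {c m x : ℝ}

theorem clampFrom_of_lt (hx : x < c) : clampFrom Fl Fu c m x = Fl x := if_pos hx

theorem clampFrom_of_le (hx : c ≤ x) : clampFrom Fl Fu c m x = max (Fl x) (min (Fu x) m) :=
  if_neg hx.not_gt

theorem le_clampFrom : Fl x ≤ clampFrom Fl Fu c m x := by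
  rcases lt_or_ge x c with hx | hx
  · exact (clampFrom_of_lt hx).ge
  · exact (clampFrom_of_le hx).ge.trans' (le_max_left _ _)

theorem clampFrom_le (hle : Fl x ≤ Fu x) : clampFrom Fl Fu c m x ≤ Fu x := by
  rcases lt_or_ge x c with hx | hx
  · exact (clampFrom_of_lt hx).le.trans hle
  · exact (clampFrom_of_le hx).le.trans (max_le hle (min_le_left _ _))

theorem min_le_clampFrom (hx : c ≤ x) : min (Fu x) m ≤ clampFrom Fl Fu c m x :=
  (clampFrom_of_le hx).ge.trans' (le_max_right _ _)

theorem clampFrom_apply_self (hx : c ≤ x) : clampFrom Fl Fu c (Fl x) x = Fl x := by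
  rw [clampFrom_of_le hx, max_eq_left (min_le_right _ _)]

theorem tendsto_clampFrom_atBot {l : Filter ℝ} (hFl : Tendsto Fl atBot l) :
    Tendsto (clampFrom Fl Fu c m) atBot l :=
  hFl.congr' ((eventually_lt_atBot c).mono fun _ hx => (clampFrom_of_lt hx).symm)

theorem tendsto_clampFrom_atTop {l : ℝ} (hle : ∀ x, Fl x ≤ Fu x) (hFl : Tendsto Fl atTop (𝓝 l))
    (hFu : Tendsto Fu atTop (𝓝 l)) : Tendsto (clampFrom Fl Fu c m) atTop (𝓝 l) :=
  tendsto_of_tendsto_of_tendsto_of_le_of_le hFl hFu (fun _ => le_clampFrom)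
    (fun x => clampFrom_le (hle x))

theorem setIntegral_sub_clampFrom_le (Fl Fu : StieltjesFunction ℝ) (μ : Measure ℝ)
    [IsFiniteMeasureOnCompacts μ] {a b c : ℝ} (hac : a ≤ c) (hcb : c ≤ b) :
    ∫ t in Ioc a b, (Fl b - clampFrom Fl Fu c (Fl b) t) ∂μ ≤
      μ.real (Ioc a c) * (Fl b - Fl a) + ∫ t in Ioc a b, (Fl b - Fu t)⁺ ∂μ := by
  set G := clampFrom Fl Fu c (Fl b)
  have hG : Antitone fun t => Fl b - G t := fun s t hst => sub_le_sub_left (G.mono hst) _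
  have hposPart : Antitone fun t => (Fl b - Fu t)⁺ := fun s t hst =>
    posPart_mono (sub_le_sub_left (Fu.mono hst) _)
  have hnear : ∫ t in Ioc a c, (Fl b - G t) ∂μ ≤ μ.real (Ioc a c) * (Fl b - Fl a) := by
    calc _ ≤ ∫ _ in Ioc a c, (Fl b - Fl a) ∂μ :=
          setIntegral_mono_on (hG.integrableOn_Ioc μ a c)
            (integrableOn_const measure_Ioc_lt_top.ne) measurableSet_Ioc
            fun t ht => sub_le_sub_left ((Fl.mono ht.1.le).trans le_clampFrom) _
      _ = _ := by rw [setIntegral_const, smul_eq_mul]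
  have hfar : ∫ t in Ioc c b, (Fl b - G t) ∂μ ≤ ∫ t in Ioc a b, (Fl b - Fu t)⁺ ∂μ := by
    calc _ ≤ ∫ t in Ioc c b, (Fl b - Fu t)⁺ ∂μ :=
          setIntegral_mono_on (hG.integrableOn_Ioc μ c b) (hposPart.integrableOn_Ioc μ c b)
            measurableSet_Ioc fun t ht => by
              rw [show (Fl b - Fu t)⁺ = max (Fl b - Fu t) 0 from rfl, ← sub_self (Fl b),
                max_sub_sub_left]
              exact sub_le_sub_left (min_le_clampFrom ht.1.le) _
      _ ≤ _ := setIntegral_mono_set (hposPart.integrableOn_Ioc μ a b)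
          (ae_of_all _ fun _ => posPart_nonneg _) (Ioc_subset_Ioc_left hac).eventuallyLE
  calc ∫ t in Ioc a b, (Fl b - G t) ∂μ
      = ∫ t in Ioc a c, (Fl b - G t) ∂μ + ∫ t in Ioc c b, (Fl b - G t) ∂μ := by
        rw [← setIntegral_union (Ioc_disjoint_Ioc_of_le le_rfl) measurableSet_Ioc
          (hG.integrableOn_Ioc μ a c) (hG.integrableOn_Ioc μ c b), Ioc_union_Ioc_eq_Ioc hac hcb]
    _ ≤ _ := add_le_add hnear hfar

theorem le_setIntegral_Ioc_div (F H : StieltjesFunction ℝ) (hH : Continuous H)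
    {Fl Fu : ℝ → ℝ} (hFl : Monotone Fl) (hFu : Monotone Fu) (hlo : ∀ x, Fl x ≤ F x)
    (hup : ∀ x, F x ≤ Fu x) {a b : ℝ} (hpos : Fu a < Fl b) :
    H a + (∫ t in Ioc a b, (Fl b - Fu t)⁺ ∂H.measure) / (Fl b - Fl a) ≤
      (∫ x in Ioc a b, H x ∂F.measure) / (F b - F a) := by
  have hD : 0 < F b - F a := by linarith [hup a, hlo b]
  have hDl : 0 < Fl b - Fl a := by linarith [hlo a, hup a]
  rw [setIntegral_Ioc_div_eq F H hH (sub_pos.1 hD), add_le_add_iff_left, div_le_div_iff₀ hDl hD]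
  exact setIntegral_posPart_sub_mul_le hFl F.mono hFu hlo hup _ a b

theorem setIntegral_Ioc_clampFrom_div_le (Fl Fu H : StieltjesFunction ℝ) (hH : Continuous H)
    {a b c : ℝ} (hpos : Fl a < Fl b) (hac : a < c) (hcb : c ≤ b) :
    (∫ x in Ioc a b, H x ∂(clampFrom Fl Fu c (Fl b)).measure) /
        (clampFrom Fl Fu c (Fl b) b - clampFrom Fl Fu c (Fl b) a) ≤
      H a + (∫ t in Ioc a b, (Fl b - Fu t)⁺ ∂H.measure) / (Fl b - Fl a) + (H c - H a) := by
  set G := clampFrom Fl Fu c (Fl b)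
  have hGa : G a = Fl a := clampFrom_of_lt hac
  have hGb : G b = Fl b := clampFrom_apply_self hcb
  have hDl : 0 < Fl b - Fl a := sub_pos.2 hpos
  have hmass : H.measure.real (Ioc a c) = H c - H a := by
    rw [measureReal_def, measure_Ioc, ENNReal.toReal_ofReal (sub_nonneg.2 (H.mono hac.le))]
  have hJ := setIntegral_sub_clampFrom_le Fl Fu H.measure hac.le hcb
  rw [hmass] at hJ
  rw [setIntegral_Ioc_div_eq G H hH (by rwa [hGa, hGb]), hGa, hGb, add_assoc,
    add_le_add_iff_left, div_add' _ _ _ hDl.ne', div_le_div_iff_of_pos_right hDl]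
  linarith

end StieltjesFunction

theorem lower_conditional_expectation_monotone_general
    (Fl Fu : StieltjesFunction ℝ)
    (hFl : Tendsto Fl atBot (nhds 0) ∧ Tendsto Fl atTop (nhds 1))
    (hFu : Tendsto Fu atBot (nhds 0) ∧ Tendsto Fu atTop (nhds 1))
    (hle : ∀ x, Fl x ≤ Fu x)
    (hFuc : Continuous Fu)
    (b₀ b₁ : ℝ) (hpos : Fu b₀ < Fl b₁)
    (h : ℝ → ℝ) (hcont : Continuous h)
    (hmono : Monotone h)
    (Φ : Set (StieltjesFunction ℝ))
    (hΦ : Φ = {F : StieltjesFunction ℝ |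
        (Tendsto F atBot (nhds 0) ∧ Tendsto F atTop (nhds 1)) ∧
          ∀ x, Fl x ≤ F x ∧ F x ≤ Fu x}) :
    sInf ((fun F : StieltjesFunction ℝ =>
        (∫ x in Ioc b₀ b₁, h x ∂F.measure) / (F b₁ - F b₀)) '' Φ)
      = (Fl b₁ - Fl b₀)⁻¹ *
        (h b₀ * (Fu b₀ - Fl b₀)
          + ∫ x in Ioc b₀ (sInf {x : ℝ | Fl b₁ ≤ Fu x}), h x ∂Fu.measure) := by
  obtain ⟨H, rfl⟩ : ∃ H : StieltjesFunction ℝ, ⇑H = h :=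
    ⟨⟨h, hmono, fun _ => hcont.continuousWithinAt⟩, rfl⟩
  subst hΦ
  have hb : b₀ < b₁ := Fu.mono.reflect_lt (hpos.trans_le (hle b₁))
  have hDl : 0 < Fl b₁ - Fl b₀ := by linarith [hle b₀]
  obtain ⟨⟨hb₀β, hβb₁⟩, hFuβ⟩ := Fu.mono.csInf_setOf_le_mem_Icc hFuc hpos (hle b₁)
  set K := ∫ t in Ioc b₀ b₁, (Fl b₁ - Fu t)⁺ ∂H.measure
  have hvalue : (Fl b₁ - Fl b₀)⁻¹ * (H b₀ * (Fu b₀ - Fl b₀) +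
      ∫ x in Ioc b₀ (sInf {x | Fl b₁ ≤ Fu x}), H x ∂Fu.measure) =
      H b₀ + K / (Fl b₁ - Fl b₀) := by
    rw [Fu.setIntegral_Ioc_integration_by_parts H hcont hb₀β,
      ← Fu.mono.setIntegral_Ioc_posPart_sub _ hb₀β hβb₁, hFuβ]
    field_simp
    ring
  rw [hvalue]
  refine csInf_eq_of_forall_ge_of_forall_gt_exists_lt
    ⟨_, Fu, ⟨hFu, fun x => ⟨hle x, le_rfl⟩⟩, rfl⟩ ?_ fun w hw => ?_
  · rintro _ ⟨F, ⟨-, hF⟩, rfl⟩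
    exact F.le_setIntegral_Ioc_div H hcont Fl.mono Fu.mono (fun x => (hF x).1)
      (fun x => (hF x).2) hpos
  · have hclose : ∀ᶠ c in 𝓝[>] b₀, H c < w - K / (Fl b₁ - Fl b₀) :=
      nhdsWithin_le_nhds <| (hcont.tendsto b₀).eventually (eventually_lt_nhds (by linarith))
    have hnear : ∀ᶠ c in 𝓝[>] b₀, c ∈ Ioo b₀ b₁ := Ioo_mem_nhdsGT hb
    obtain ⟨c, ⟨hb₀c, hcb₁⟩, hcw⟩ := (hnear.and hclose).exists
    refine ⟨_, ⟨Fl.clampFrom Fu c (Fl b₁), ⟨⟨StieltjesFunction.tendsto_clampFrom_atBot hFl.1,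
      StieltjesFunction.tendsto_clampFrom_atTop hle hFl.2 hFu.2⟩,
      fun x => ⟨StieltjesFunction.le_clampFrom, StieltjesFunction.clampFrom_le (hle x)⟩⟩, rfl⟩, ?_⟩
    exact (Fl.setIntegral_Ioc_clampFrom_div_le Fu H hcont (by linarith) hb₀c hcb₁.le).trans_lt
      (by linarith)

/-- Closed form for the lower conditional expectation of a
monotone non-decreasing `h` given `B = [b₀,b₁]`. -/
theorem lower_conditional_expectation_monotone
    (Fl Fu : StieltjesFunction ℝ)
    (hFl : Tendsto Fl atBot (nhds 0) ∧ Tendsto Fl atTop (nhds 1))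
    (hFu : Tendsto Fu atBot (nhds 0) ∧ Tendsto Fu atTop (nhds 1))
    (hle : ∀ x, Fl x ≤ Fu x)
    (hFuc : Continuous Fu) (hFusm : StrictMono Fu)
    (b₀ b₁ : ℝ) (hb : b₀ ≤ b₁) (hpos : Fu b₀ < Fl b₁)
    (h : ℝ → ℝ) (hcont : Continuous h) (C : ℝ) (hbd : ∀ x, |h x| ≤ C)
    (hmono : Monotone h)
    (Φ : Set (StieltjesFunction ℝ))
    (hΦ : Φ = {F : StieltjesFunction ℝ |
        (Tendsto F atBot (nhds 0) ∧ Tendsto F atTop (nhds 1)) ∧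
          ∀ x, Fl x ≤ F x ∧ F x ≤ Fu x}) :
    sInf ((fun F : StieltjesFunction ℝ =>
        (∫ x in Ioc b₀ b₁, h x ∂F.measure) / (F b₁ - F b₀)) '' Φ)
      = (Fl b₁ - Fl b₀)⁻¹ *
        (h b₀ * (Fu b₀ - Fl b₀)
          + ∫ x in Ioc b₀ (sInf {x : ℝ | Fl b₁ ≤ Fu x}), h x ∂Fu.measure) :=
  lower_conditional_expectation_monotone_general Fl Fu hFl hFu hle hFuc b₀ b₁ hpos h hcont hmono Φ
    hΦ
end

section
/- Let x₁ < x₂ < … < x_N be real numbers and [F̲,F̄] a p-box with F̄(x_i) ≥ F̲(x_{i+1}) for i = 1,…,N−1 and F̄(x_N) = 1 (setting F̲(x_{N+1}) = 1). Suppose nonnegative weights z₁,…,z_N satisfy Σ z_k = 1 and F̲(x_{i+1}) ≤ Σ_{k=1}^{i} z_k ≤ F̄(x_i) for all i. Then the discrete distribution F placing mass z_k at x_k satisfies F̲(x) ≤ F(x) ≤ F̄(x) for all x ∈ [x_1, x_N], hence lies in Φ(F̲,F̄) on that range. -/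
open Set Filter

/-- The tightened (guaranteed inner) linear program: a discrete
distribution placing mass `z_k` at `x_k`, whose partial sums satisfy
`F̲(x_{i+1}) ≤ Σ_{k≤i} z_k ≤ F̄(x_i)`, lies between `F̲` and `F̄` on
`[x_1, x_N]`. -/
theorem inner_linear_program_compatible
    (Fl Fu : ℝ → ℝ) (hFlmono : Monotone Fl) (hFumono : Monotone Fu)
    (hle : ∀ x, Fl x ≤ Fu x)
    (N : ℕ) (hN : 0 < N) (x : ℕ → ℝ)
    (hx : ∀ i, i + 1 < N → x i < x (i + 1))
    (hcompat : ∀ i, i + 1 < N → Fl (x (i + 1)) ≤ Fu (x i))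
    (hFuN : Fu (x (N - 1)) = 1)
    (z : ℕ → ℝ) (hz : ∀ i < N, 0 ≤ z i)
    (hsum : ∑ k ∈ Finset.range N, z k = 1)
    (hub : ∀ i < N, ∑ k ∈ Finset.range (i + 1), z k ≤ Fu (x i))
    (hlb : ∀ i, i + 1 < N → Fl (x (i + 1)) ≤ ∑ k ∈ Finset.range (i + 1), z k) :
    ∀ t ∈ Icc (x 0) (x (N - 1)),
      Fl t ≤ (∑ k ∈ Finset.range N, if x k ≤ t then z k else 0) ∧
      (∑ k ∈ Finset.range N, if x k ≤ t then z k else 0) ≤ Fu t := by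
  intro t ht
  classical
  obtain ⟨ht0, htN⟩ := ht
  have hxmono : ∀ a b, a ≤ b → b ≤ N - 1 → x a ≤ x b := by
    intro a b hab hbN
    induction b with
    | zero => simp [Nat.le_zero.mp hab]
    | succ m ih =>
      rcases Nat.lt_or_ge a (m + 1) with h | h
      · exact (ih (Nat.lt_succ_iff.mp h) (by omega)).trans (le_of_lt (hx m (by omega)))
      · have : a = m + 1 := le_antisymm hab h
        simp [this]
  set i := Nat.findGreatest (fun k => x k ≤ t) (N - 1) with hidef
  have hi_le : i ≤ N - 1 := Nat.findGreatest_le _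
  have hPi : x i ≤ t := Nat.findGreatest_spec (P := fun k => x k ≤ t) (Nat.zero_le _) ht0
  have hmax : ∀ k, i < k → k ≤ N - 1 → ¬ x k ≤ t := fun k hk1 hk2 =>
    Nat.findGreatest_is_greatest hk1 hk2
  have hiN : i + 1 ≤ N := by omega
  have hsumeq : (∑ k ∈ Finset.range N, if x k ≤ t then z k else 0)
      = ∑ k ∈ Finset.range (i + 1), z k := by
    rw [← Finset.sum_range_add_sum_Ico _ hiN]
    have h1 : ∑ k ∈ Finset.range (i + 1), (if x k ≤ t then z k else 0)
        = ∑ k ∈ Finset.range (i + 1), z k := by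
      refine Finset.sum_congr rfl ?_
      intro k hk
      have hk' : k ≤ i := Nat.lt_succ_iff.mp (Finset.mem_range.mp hk)
      have : x k ≤ t := (hxmono k i hk' hi_le).trans hPi
      simp [this]
    have h2 : ∑ k ∈ Finset.Ico (i + 1) N, (if x k ≤ t then z k else 0) = 0 := by
      refine Finset.sum_eq_zero ?_
      intro k hk
      obtain ⟨hk1, hk2⟩ := Finset.mem_Ico.mp hk
      have : ¬ x k ≤ t := hmax k (by omega) (by omega)
      simp [this]
    rw [h1, h2, add_zero]
  rw [hsumeq]
  constructor
  · by_cases h : i + 1 < N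
    · have hlt : ¬ x (i + 1) ≤ t := hmax (i + 1) (Nat.lt_succ_self i) (by omega)
      have : Fl t ≤ Fl (x (i + 1)) := hFlmono (le_of_lt (not_le.mp hlt))
      exact this.trans (hlb i h)
    · have hieq : i = N - 1 := by omega
      have : ∑ k ∈ Finset.range (i + 1), z k = 1 := by
        rw [hieq]
        have : N - 1 + 1 = N := by omega
        rw [this, hsum]
      rw [this]
      calc Fl t ≤ Fl (x (N - 1)) := hFlmono htN
        _ ≤ Fu (x (N - 1)) := hle _
        _ = 1 := hFuN
  · exact (hub i (by omega)).trans (hFumono hPi)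
end
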